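/- Let (Q, f) be a connected ribbon quiver. Then the subgroup of the group of permutations of Q₁ generated by f and g acts transitively on Q₁: for any two arrows α, β ∈ Q₁ there is a permutation in the subgroup generated by f and g taking α to β. -/

import Mathlib

/-!
Since `ᾱ = (g * f⁻¹) α`, the two arrows leaving a vertex lie in one orbit of `⟨f, g⟩`,
and `f` carries an arrow leaving `s α` to one leaving `t α`. Hence the relation "every arrow
leaving `u` and every arrow leaving `v` lie in one orbit" is an equivalence on vertices
containing the arrow relation, so by connectedness it relates all vertices.
-/

open MulAction

theorem Finset.eq_or_eq_of_card_eq_two {α : Type*} {s : Finset α} {a b c : α}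
    (hs : s.card = 2) (ha : a ∈ s) (hb : b ∈ s) (hc : c ∈ s) (hab : a ≠ b) :
    c = a ∨ c = b := by
  classical
  obtain ⟨x, y, -, rfl⟩ := Finset.card_eq_two.mp hs
  simp only [Finset.mem_insert, Finset.mem_singleton] at ha hb hc
  grind

theorem isPretransitive_of_connected {G A V : Type*} [Group G] [MulAction G A] {s t : A → V}
    (hs : Function.Surjective s) (hfibre : ∀ a b, s a = s b → orbitRel G A a b)
    (φ : G) (hφ : ∀ e, s (φ • e) = t e)
    (hconn : ∀ u v : V, Relation.EqvGen (fun x y => ∃ e : A, s e = x ∧ t e = y) u v) :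
    IsPretransitive G A := by
  set O := orbitRel G A
  let r : V → V → Prop := fun u v => ∀ a b, s a = u → s b = v → O a b
  have hr : Equivalence r :=
    { refl := fun _ a b ha hb => hfibre a b (ha.trans hb.symm)
      symm := fun h a b ha hb => O.symm' (h b a hb ha)
      trans := fun {_ v _} huv hvw a b ha hb => by
        obtain ⟨c, rfl⟩ := hs v
        exact O.trans' (huv a c ha rfl) (hvw c b rfl hb) }
  have hedge : ∀ u v, (∃ e, s e = u ∧ t e = v) → r u v := by
    rintro _ _ ⟨e, rfl, rfl⟩ a b ha hb
    have hstep : O e (φ • e) := O.symm' (mem_orbit e φ)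
    exact O.trans' (O.trans' (hfibre a e ha) hstep) (hfibre _ b ((hφ e).trans hb.symm))
  refine ⟨fun a b => O.symm' ?_⟩
  exact hr.eqvGen_iff.mp (Relation.EqvGen.mono hedge _ _ (hconn (s a) (s b))) a b rfl rfl

section RibbonQuiver

variable {V A : Type*} {s : A → V} {f g : Equiv.Perm A} {bar : A → A}

theorem bar_eq_mul_inv_apply (hg : ∀ a : A, g a = bar (f a)) (a : A) :
    bar a = (g * f⁻¹) a := by
  simp [hg]

variable [Fintype A] [DecidableEq V]

theorem eq_or_eq_bar_of_source_eq
    (hout : ∀ v : V, (Finset.univ.filter (fun a => s a = v)).card = 2)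
    (hbar : ∀ a : A, bar a ≠ a ∧ s (bar a) = s a) {a b : A} (hab : s a = s b) :
    b = a ∨ b = bar a :=
  Finset.eq_or_eq_of_card_eq_two (hout (s a)) (by simp) (by simp [(hbar a).2])
    (by simp [hab]) (hbar a).1.symm

theorem orbitRel_closure_of_source_eq
    (hout : ∀ v : V, (Finset.univ.filter (fun a => s a = v)).card = 2)
    (hbar : ∀ a : A, bar a ≠ a ∧ s (bar a) = s a) (hg : ∀ a : A, g a = bar (f a))
    {a b : A} (hab : s a = s b) :
    orbitRel (Subgroup.closure ({f, g} : Set (Equiv.Perm A))) A a b := by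
  set G := Subgroup.closure ({f, g} : Set (Equiv.Perm A))
  rcases eq_or_eq_bar_of_source_eq hout hbar hab with rfl | rfl
  · exact (orbitRel G A).refl' _
  · have hgf : g * f⁻¹ ∈ G :=
      G.mul_mem (Subgroup.subset_closure (by simp)) (G.inv_mem (Subgroup.subset_closure (by simp)))
    exact (orbitRel G A).symm' ⟨⟨g * f⁻¹, hgf⟩, (bar_eq_mul_inv_apply hg a).symm⟩

end RibbonQuiver

theorem ribbonQuiver_fg_transitive_general {V A : Type*} [Fintype A]
    [DecidableEq V]
    (s t : A → V) (f : Equiv.Perm A)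
    (hout : ∀ v : V, (Finset.univ.filter (fun a => s a = v)).card = 2)
    (hsf : ∀ a : A, s (f a) = t a)
    (bar : A → A) (hbar : ∀ a : A, bar a ≠ a ∧ s (bar a) = s a)
    (g : Equiv.Perm A) (hg : ∀ a : A, g a = bar (f a))
    (hconn : ∀ u v : V, Relation.EqvGen (fun x y => ∃ e : A, s e = x ∧ t e = y) u v) :
    ∀ α β : A, ∃ p ∈ Subgroup.closure ({f, g} : Set (Equiv.Perm A)), p α = β := by
  intro α β
  set G := Subgroup.closure ({f, g} : Set (Equiv.Perm A))
  have hsurj : Function.Surjective s := fun v => by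
    obtain ⟨a, ha⟩ := Finset.card_pos.mp (hout v ▸ two_pos)
    exact ⟨a, (Finset.mem_filter.mp ha).2⟩
  have hf : f ∈ G := Subgroup.subset_closure (by simp)
  have : IsPretransitive G A := isPretransitive_of_connected hsurj
    (fun _ _ => orbitRel_closure_of_source_eq hout hbar hg) ⟨f, hf⟩ hsf hconn
  obtain ⟨⟨p, hp⟩, hpα⟩ := exists_smul_eq G α β
  exact ⟨p, hp, hpα⟩

/-- Let `(Q, f)` be a connected ribbon quiver. Then the subgroup of the
permutation group of `Q₁` generated by `f` and `g` acts transitively on `Q₁`. -/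
theorem ribbonQuiver_fg_transitive {V A : Type*} [Fintype V] [Fintype A]
    [DecidableEq V] [DecidableEq A]
    (s t : A → V) (f : Equiv.Perm A)
    (hout : ∀ v : V, (Finset.univ.filter (fun a => s a = v)).card = 2)
    (hin : ∀ v : V, (Finset.univ.filter (fun a => t a = v)).card = 2)
    (hsf : ∀ a : A, s (f a) = t a)
    (bar : A → A) (hbar : ∀ a : A, bar a ≠ a ∧ s (bar a) = s a)
    (g : Equiv.Perm A) (hg : ∀ a : A, g a = bar (f a))
    (hne : Nonempty V)
    (hconn : ∀ u v : V, Relation.EqvGen (fun x y => ∃ e : A, s e = x ∧ t e = y) u v) :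
    ∀ α β : A, ∃ p ∈ Subgroup.closure ({f, g} : Set (Equiv.Perm A)), p α = β :=
  ribbonQuiver_fg_transitive_general s t f hout hsf bar hbar g hg hconn
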